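/- For every uncountable cardinal κ, every set S ⊆ [κ]^ω that contains a club is a local club. -/

import Mathlib

open Set Cardinal

noncomputable section

/-- The first uncountable ordinal `ω₁`. -/
def omega1 : Ordinal.{0} := (Cardinal.aleph 1).ord

/-- `x ∩ ω₁` is a countable ordinal. -/
def GoodSet (x : Set Ordinal.{0}) : Prop :=
  ∃ δ < omega1, x ∩ Set.Iio omega1 = Set.Iio δ

/-- `δ_x`: the countable ordinal `x ∩ ω₁`. -/
def delta (x : Set Ordinal.{0}) : Ordinal.{0} :=
  sInf {δ : Ordinal.{0} | x ∩ Set.Iio omega1 = Set.Iio δ}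

/-- The space `[X]^ω` of countable subsets of `X` (restricted, as in the paper,
to those `x` whose intersection with `ω₁` is a countable ordinal). -/
def countPow (X : Set Ordinal.{0}) : Set (Set Ordinal.{0}) :=
  {x | x ⊆ X ∧ x.Countable ∧ GoodSet x}

/-- `C` is club in `[X]^ω`: it is cofinal and closed under unions of countable
`⊆`-increasing chains. -/
def IsClubIn (X : Set Ordinal.{0}) (C : Set (Set Ordinal.{0})) : Prop :=
  C ⊆ countPow X ∧ (∀ x ∈ countPow X, ∃ y ∈ C, x ⊆ y) ∧
    ∀ D : Set (Set Ordinal.{0}), D ⊆ C → D.Countable → D.Nonempty →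
      IsChain (· ⊆ ·) D → ⋃₀ D ∈ C

/-- `S` is stationary in `[X]^ω`: it meets every club. -/
def IsStatIn (X : Set Ordinal.{0}) (S : Set (Set Ordinal.{0})) : Prop :=
  ∀ C, IsClubIn X C → (S ∩ C).Nonempty

/-- Club subsets of `ω₁` (closed unbounded in the ordinal `ω₁`). -/
def IsClubOmega1 (C : Set Ordinal.{0}) : Prop :=
  C ⊆ Set.Iio omega1 ∧ (∀ α < omega1, ∃ β ∈ C, α < β) ∧
    ∀ α < omega1, α ≠ 0 → (∀ β < α, ∃ γ ∈ C, β < γ ∧ γ < α) → α ∈ C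

/-- Stationary subsets of `ω₁`. -/
def IsStatOmega1 (A : Set Ordinal.{0}) : Prop :=
  ∀ C, IsClubOmega1 C → (A ∩ C).Nonempty

/-- A (continuous, `δ`-increasing) `ω₁`-chain: `⟨f α : α < ω₁⟩`. -/
def IsOmega1Chain (f : Ordinal.{0} → Set Ordinal.{0}) : Prop :=
  (∀ α β, α < β → β < omega1 → f α ⊆ f β) ∧
  (∀ β < omega1, Order.IsSuccLimit β → f β = ⋃ α ∈ Set.Iio β, f α) ∧
  (∀ α β, α < β → β < omega1 → delta (f α) < delta (f β))

/-- The space `[Y]^{ω₁}` of subsets of `Y` of cardinality `ℵ₁`. -/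
def aleph1Pow (Y : Set Ordinal.{0}) : Set (Set Ordinal.{0}) :=
  {X | X ⊆ Y ∧ Cardinal.mk X = Cardinal.aleph 1}

/-- `C` is club in `[Y]^{ω₁}`: cofinal and closed under unions of
`⊆`-increasing chains of length `ω₁`. -/
def IsClubAleph1 (Y : Set Ordinal.{0}) (C : Set (Set Ordinal.{0})) : Prop :=
  C ⊆ aleph1Pow Y ∧ (∀ X ∈ aleph1Pow Y, ∃ Z ∈ C, X ⊆ Z) ∧
    ∀ f : Ordinal.{0} → Set Ordinal.{0}, (∀ α β, α < β → β < omega1 → f α ⊆ f β) →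
      (∀ α < omega1, f α ∈ C) → (⋃ α ∈ Set.Iio omega1, f α) ∈ C

/-- `S` is a local club in `[Y]^ω`: the set of `X ∈ [Y]^{ω₁}` such that
`S ∩ [X]^ω` contains a club in `[X]^ω` contains a club in `[Y]^{ω₁}`. -/
def IsLocalClub (Y : Set Ordinal.{0}) (S : Set (Set Ordinal.{0})) : Prop :=
  ∃ C, IsClubAleph1 Y C ∧ ∀ X ∈ C, ∃ D, IsClubIn X D ∧ D ⊆ S

/-- `S` is projective stationary in `[X]^ω`. -/
def ProjStationary (X : Set Ordinal.{0}) (S : Set (Set Ordinal.{0})) : Prop :=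
  ∀ A ⊆ Set.Iio omega1, IsStatOmega1 A → IsStatIn X {x ∈ S | delta x ∈ A}

/-- `S ⊆ [κ]^ω` is spanning. -/
def IsSpanning (κ : Cardinal) (S : Set (Set Ordinal.{0})) : Prop :=
  ∀ lam : Cardinal, κ ≤ lam → ∀ C, IsClubIn (Set.Iio lam.ord) C →
    ∃ D, IsClubIn (Set.Iio lam.ord) D ∧
      ∀ x ∈ D, ∃ y ∈ C, x ⊆ y ∧ delta x = delta y ∧ (y ∩ Set.Iio κ.ord) ∈ S

/-- `S ⊆ [X]^ω` is reflective: for every club `C`, `S ∩ C` contains an `ω₁`-chain. -/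
def IsReflective (X : Set Ordinal.{0}) (S : Set (Set Ordinal.{0})) : Prop :=
  ∀ C, IsClubIn X C → ∃ f, IsOmega1Chain f ∧ ∀ α < omega1, f α ∈ S ∩ C

/-- `S ⊆ [X]^ω` is full. -/
def IsFull (X : Set Ordinal.{0}) (S : Set (Set Ordinal.{0})) : Prop :=
  ∀ A ⊆ Set.Iio omega1, IsStatOmega1 A →
    ∃ B, B ⊆ A ∧ IsStatOmega1 B ∧ ∃ C, IsClubIn X C ∧ {x ∈ C | delta x ∈ B} ⊆ S

/-- The order type of a set of ordinals. -/
def otp (s : Set Ordinal.{0}) : Ordinal.{0} :=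
  sInf {o : Ordinal.{0} | Nonempty (↥s ≃o ↥(Set.Iio o))}

/-- The nonstationary ideal on `ω₁` is saturated. -/
def NSSaturated : Prop :=
  ∀ W : Set (Set Ordinal.{0}), (∀ A ∈ W, A ⊆ Set.Iio omega1 ∧ IsStatOmega1 A) →
    (∀ A ∈ W, ∀ B ∈ W, A ≠ B → ¬ IsStatOmega1 (A ∩ B)) →
    Cardinal.mk W ≤ Cardinal.aleph 1


namespace LocalClubAux

lemma omega1_isLimit : Order.IsSuccLimit omega1 :=
  Cardinal.isSuccLimit_ord Cardinal.aleph0_lt_aleph_one.le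

lemma exists_bound_of_countable {x : Set Ordinal.{0}} (hx : x.Countable) :
    ∃ δ < omega1, x ∩ Set.Iio omega1 ⊆ Set.Iio δ := by
  rcases (x ∩ Set.Iio omega1).eq_empty_or_nonempty with h | h
  · exact ⟨1, Ordinal.one_lt_of_isSuccLimit omega1_isLimit, by rw [h]; exact Set.empty_subset _⟩
  · obtain ⟨a, ha⟩ := (hx.mono Set.inter_subset_left).exists_eq_range h
    refine ⟨⨆ n, Order.succ (a n), ?_, ?_⟩
    · apply Cardinal.iSup_lt_ord_of_isRegular Cardinal.isRegular_aleph_one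
      · exact Cardinal.mk_le_aleph0.trans_lt Cardinal.aleph0_lt_aleph_one
      · intro n
        have hmem : a n ∈ x ∩ Set.Iio omega1 := ha ▸ Set.mem_range_self n
        exact omega1_isLimit.succ_lt hmem.2
    · intro β hβ
      rw [ha] at hβ
      obtain ⟨n, rfl⟩ := hβ
      exact lt_of_lt_of_le (Order.lt_succ (a n))
        (le_ciSup (Ordinal.bddAbove_range (fun n => Order.succ (a n))) n)

lemma countable_Iio_of_lt {δ : Ordinal.{0}} (hδ : δ < omega1) : (Set.Iio δ).Countable := by
  rw [Cardinal.countable_iff_lt_aleph_one, Ordinal.mk_Iio_ordinal]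
  calc Cardinal.lift.{1} δ.card < Cardinal.lift.{1} (Cardinal.aleph 1) :=
        Cardinal.lift_lt.mpr (Cardinal.lt_ord.mp hδ)
    _ = Cardinal.aleph 1 := by rw [Cardinal.lift_aleph, Ordinal.lift_one]

lemma omega1_le_ord {κ : Cardinal.{0}} (hκ : Cardinal.aleph0 < κ) : omega1 ≤ κ.ord :=
  Cardinal.ord_le_ord.mpr (by rw [← Cardinal.succ_aleph0]; exact Order.succ_le_of_lt hκ)

lemma exists_mem_countPow_superset {κ : Cardinal.{0}} (hκ : Cardinal.aleph0 < κ)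
    {x : Set Ordinal.{0}} (hx : x.Countable) (hxs : x ⊆ Set.Iio κ.ord) :
    ∃ x', x ⊆ x' ∧ x' ∈ countPow (Set.Iio κ.ord) := by
  obtain ⟨δ, hδ, hsub⟩ := exists_bound_of_countable hx
  have h1 : omega1 ≤ κ.ord := omega1_le_ord hκ
  refine ⟨x ∪ Set.Iio δ, Set.subset_union_left, ?_, ?_, ⟨δ, hδ, ?_⟩⟩
  · exact Set.union_subset hxs fun β hβ => lt_of_lt_of_le (lt_trans hβ hδ) h1
  · exact hx.union (countable_Iio_of_lt hδ)
  · ext β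
    simp only [Set.mem_inter_iff, Set.mem_union, Set.mem_Iio]
    constructor
    · rintro ⟨h2 | h2, h3⟩
      · exact hsub ⟨h2, h3⟩
      · exact h2
    · intro h2
      exact ⟨Or.inr h2, lt_trans h2 hδ⟩

noncomputable def ybar (g : Set Ordinal.{0} → Set Ordinal.{0}) (s : Finset Ordinal.{0}) :
    Set Ordinal.{0} :=
  g ((↑s : Set Ordinal.{0}) ∪ ⋃ t ∈ s.ssubsets, ybar g t)
termination_by s.card
decreasing_by exact Finset.card_lt_card (Finset.mem_ssubsets.mp (by assumption))

lemma ybar_spec {C : Set (Set Ordinal.{0})} {K : Set Ordinal.{0}}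
    (hCsub : C ⊆ countPow K) {g : Set Ordinal.{0} → Set Ordinal.{0}}
    (hg : ∀ x : Set Ordinal.{0}, x.Countable → x ⊆ K → g x ∈ C ∧ x ⊆ g x) :
    ∀ s : Finset Ordinal.{0}, ↑s ⊆ K →
      ybar g s ∈ C ∧ ↑s ⊆ ybar g s ∧ ∀ t ∈ s.ssubsets, ybar g t ⊆ ybar g s := by
  intro s
  induction s using Finset.strongInduction with
  | _ s ih =>
    intro hsK
    set A : Set Ordinal.{0} := (↑s : Set Ordinal.{0}) ∪ ⋃ t ∈ s.ssubsets, ybar g t with hA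
    have hmem : ∀ t ∈ s.ssubsets, ybar g t ∈ C := by
      intro t ht
      have h1 := Finset.mem_ssubsets.mp ht
      exact (ih t h1 ((Finset.coe_subset.mpr h1.subset).trans hsK)).1
    have hAc : A.Countable := by
      apply s.finite_toSet.countable.union
      rw [← Finset.set_biUnion_coe]
      exact Set.Countable.biUnion s.ssubsets.finite_toSet.countable
        (fun t ht => (hCsub (hmem t (Finset.mem_coe.mp ht))).2.1)
    have hAK : A ⊆ K := by
      apply Set.union_subset hsK
      rw [← Finset.set_biUnion_coe]
      exact Set.iUnion₂_subset fun t ht => (hCsub (hmem t (Finset.mem_coe.mp ht))).1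
    have hgA := hg A hAc hAK
    have heq : ybar g s = g A := by rw [ybar]
    refine ⟨heq ▸ hgA.1, ?_, ?_⟩
    · rw [heq]
      exact Set.subset_union_left.trans hgA.2
    · intro t ht
      rw [heq]
      refine Set.Subset.trans ?_ (Set.subset_union_right.trans hgA.2)
      exact Set.subset_iUnion₂ (s := fun t _ => ybar g t) t ht

lemma card_finsets_le {A : Set Ordinal.{0}} (hA : Cardinal.mk A = Cardinal.aleph 1) :
    Cardinal.mk {s : Finset Ordinal.{0} | ↑s ⊆ A} ≤ Cardinal.aleph 1 := by
  classical
  haveI : Infinite A := Cardinal.aleph0_le_mk_iff.mp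
    (by rw [hA]; exact Cardinal.aleph0_lt_aleph_one.le)
  have hsurj : Function.Surjective (fun u : Finset A =>
      (⟨u.map (Function.Embedding.subtype _), by
        intro b hb
        rw [Finset.coe_map] at hb
        obtain ⟨c, _, rfl⟩ := hb
        exact c.2⟩ : {s : Finset Ordinal.{0} | ↑s ⊆ A})) := by
    rintro ⟨s, hs⟩
    refine ⟨s.subtype (· ∈ A), ?_⟩
    apply Subtype.ext
    exact Finset.subtype_map_of_mem (fun x hx => hs (Finset.mem_coe.mpr hx))
  calc Cardinal.mk {s : Finset Ordinal.{0} | ↑s ⊆ A}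
      ≤ Cardinal.mk (Finset A) := Cardinal.mk_le_of_surjective hsurj
    _ = Cardinal.mk A := Cardinal.mk_finset_of_infinite _
    _ = Cardinal.aleph 1 := hA

lemma mk_Iio_omega1 : Cardinal.mk (Set.Iio omega1) = Cardinal.aleph 1 := by
  rw [Ordinal.mk_Iio_ordinal]
  show Cardinal.lift.{1} (Cardinal.ord (Cardinal.aleph 1)).card = _
  rw [Cardinal.card_ord, Cardinal.lift_aleph, Ordinal.lift_one]

end LocalClubAux

open LocalClubAux in
/-- every set `S ⊆ [κ]^ω` containing a club is a local club. -/
theorem club_implies_localClub (κ : Cardinal) (hκ : Cardinal.aleph0 < κ)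
    (S : Set (Set Ordinal.{0})) (hS : S ⊆ countPow (Set.Iio κ.ord))
    (h : ∃ C, IsClubIn (Set.Iio κ.ord) C ∧ C ⊆ S) :
    IsLocalClub (Set.Iio κ.ord) S := by
  obtain ⟨C, hC, hCS⟩ := h
  obtain ⟨hCsub, hCcof, hCchain⟩ := hC
  set K := Set.Iio κ.ord with hK
  have hpick : ∀ x : Set Ordinal.{0}, ∃ y, x.Countable → x ⊆ K → y ∈ C ∧ x ⊆ y := by
    intro x
    by_cases hx : x.Countable ∧ x ⊆ K
    · obtain ⟨x', hxx', hx'⟩ := exists_mem_countPow_superset hκ hx.1 hx.2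
      obtain ⟨y, hyC, hy⟩ := hCcof x' hx'
      exact ⟨y, fun _ _ => ⟨hyC, hxx'.trans hy⟩⟩
    · exact ⟨∅, fun h1 h2 => absurd ⟨h1, h2⟩ hx⟩
  choose g hg using hpick
  have hg' : ∀ x : Set Ordinal.{0}, x.Countable → x ⊆ K → g x ∈ C ∧ x ⊆ g x :=
    fun x h1 h2 => hg x h1 h2
  have hspec := ybar_spec hCsub hg'
  have hmono : ∀ t s : Finset Ordinal.{0}, t ⊆ s → ↑s ⊆ K → ybar g t ⊆ ybar g s := by
    intro t s hts hsK
    rcases eq_or_ne t s with rfl | hne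
    · exact subset_rfl
    · exact (hspec s hsK).2.2 t (Finset.mem_ssubsets.mpr (hts.ssubset_of_ne hne))
  have hUcard : ∀ A : Set Ordinal.{0}, Cardinal.mk A = Cardinal.aleph 1 → A ⊆ K →
      Cardinal.mk ↥(⋃ s ∈ {s : Finset Ordinal.{0} | ↑s ⊆ A}, ybar g s) ≤ Cardinal.aleph 1 := by
    intro A hA hAK
    refine (Cardinal.mk_biUnion_le _ _).trans ?_
    have h1 := card_finsets_le hA
    have h2 : ⨆ x : {s : Finset Ordinal.{0} | ↑s ⊆ A}, Cardinal.mk ↥(ybar g x.1) ≤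
        Cardinal.aleph0 :=
      ciSup_le' fun x => Cardinal.le_aleph0_iff_set_countable.mpr
        (hCsub (hspec x.1 (x.2.trans hAK)).1).2.1
    calc _ ≤ Cardinal.aleph 1 * Cardinal.aleph0 := mul_le_mul' h1 h2
      _ ≤ Cardinal.aleph 1 * Cardinal.aleph 1 :=
        mul_le_mul' le_rfl Cardinal.aleph0_lt_aleph_one.le
      _ = Cardinal.aleph 1 := Cardinal.mul_eq_self Cardinal.aleph0_lt_aleph_one.le
  set C' : Set (Set Ordinal.{0}) :=
    {X | X ∈ aleph1Pow K ∧ ∀ s : Finset Ordinal.{0}, ↑s ⊆ X → ybar g s ⊆ X} with hC'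
  refine ⟨C', ⟨fun X hX => hX.1, ?_, ?_⟩, ?_⟩
  · -- cofinality of C'
    intro X₀ hX₀
    classical
    set F : ℕ → Set Ordinal.{0} := fun n => Nat.rec X₀
      (fun _ Xn => Xn ∪ ⋃ s ∈ {s : Finset Ordinal.{0} | ↑s ⊆ Xn}, ybar g s) n with hF
    have hFsucc : ∀ n, F (n + 1) =
        F n ∪ ⋃ s ∈ {s : Finset Ordinal.{0} | ↑s ⊆ F n}, ybar g s := fun n => rfl
    have hFmono : Monotone F := monotone_nat_of_le_succ
      (fun n => by rw [hFsucc]; exact Set.subset_union_left)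
    have hFK : ∀ n, F n ⊆ K := by
      intro n
      induction n with
      | zero => exact hX₀.1
      | succ n ih =>
        rw [hFsucc]
        exact Set.union_subset ih
          (Set.iUnion₂_subset fun s hs => (hCsub (hspec s (hs.trans ih)).1).1)
    have hFcard : ∀ n, Cardinal.mk ↥(F n) = Cardinal.aleph 1 := by
      intro n
      induction n with
      | zero => exact hX₀.2
      | succ n ih =>
        apply le_antisymm
        · rw [hFsucc]
          refine (Cardinal.mk_union_le _ _).trans ?_
          calc Cardinal.mk ↥(F n) + _ ≤ Cardinal.aleph 1 + Cardinal.aleph 1 :=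
              add_le_add ih.le (hUcard (F n) ih (hFK n))
            _ = Cardinal.aleph 1 := Cardinal.add_eq_self Cardinal.aleph0_lt_aleph_one.le
        · rw [← ih]
          exact Cardinal.mk_le_mk_of_subset (hFmono (Nat.le_succ n))
    refine ⟨⋃ n, F n, ⟨⟨Set.iUnion_subset hFK, ?_⟩, ?_⟩, Set.subset_iUnion F 0⟩
    · -- cardinality of the union
      apply le_antisymm
      · have h := Cardinal.mk_iUnion_le_lift (f := F)
        rw [Cardinal.lift_id'] at h
        simp only [Cardinal.lift_id', Cardinal.mk_nat, Cardinal.lift_aleph0] at h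
        refine h.trans ?_
        have h2 : ⨆ n, Cardinal.mk ↥(F n) ≤ Cardinal.aleph 1 :=
          ciSup_le' fun n => (hFcard n).le
        calc Cardinal.aleph0 * (⨆ n, Cardinal.mk ↥(F n)) ≤
            Cardinal.aleph 1 * Cardinal.aleph 1 :=
              mul_le_mul' Cardinal.aleph0_lt_aleph_one.le h2
          _ = Cardinal.aleph 1 := Cardinal.mul_eq_self Cardinal.aleph0_lt_aleph_one.le
      · rw [← hFcard 0]
        exact Cardinal.mk_le_mk_of_subset (Set.subset_iUnion F 0)
    · -- closure of the union
      intro s hs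
      have hbound : ∃ n, ↑s ⊆ F n := by
        induction s using Finset.induction_on with
        | empty => exact ⟨0, by simp⟩
        | @insert a t ha iht =>
          have hsub : (↑t : Set Ordinal.{0}) ⊆ ⋃ n, F n :=
            fun b hb => hs (by simp [hb])
          obtain ⟨n, hn⟩ := iht hsub
          have haZ : a ∈ ⋃ n, F n := hs (by simp)
          obtain ⟨m, hm⟩ := Set.mem_iUnion.mp haZ
          refine ⟨max m n, ?_⟩
          rw [Finset.coe_insert]
          exact Set.insert_subset (hFmono (le_max_left m n) hm)
            (hn.trans (hFmono (le_max_right m n)))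
      obtain ⟨n, hn⟩ := hbound
      refine Set.Subset.trans ?_ (Set.subset_iUnion F (n + 1))
      rw [hFsucc]
      exact Set.Subset.trans
        (Set.subset_biUnion_of_mem (show s ∈ {s : Finset Ordinal.{0} | ↑s ⊆ F n} from hn))
        Set.subset_union_right
  · -- chain closure of C'
    intro f hf hfC'
    have hfmono : ∀ β α, β ≤ α → α < omega1 → f β ⊆ f α := by
      intro β α hβα hα
      rcases eq_or_lt_of_le hβα with rfl | hlt
      · exact subset_rfl
      · exact hf β α hlt hα
    have hXK : (⋃ α ∈ Set.Iio omega1, f α) ⊆ K :=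
      Set.iUnion₂_subset fun α hα => (hfC' α hα).1.1
    refine ⟨⟨hXK, ?_⟩, ?_⟩
    · apply le_antisymm
      · refine (Cardinal.mk_biUnion_le f (Set.Iio omega1)).trans ?_
        have h1 : Cardinal.mk ↥(Set.Iio omega1) = Cardinal.aleph 1 := mk_Iio_omega1
        have h2 : ⨆ x : Set.Iio omega1, Cardinal.mk ↥(f x.1) ≤ Cardinal.aleph 1 :=
          ciSup_le' fun x => ((hfC' x.1 x.2).1.2).le
        calc _ ≤ Cardinal.aleph 1 * Cardinal.aleph 1 := by
              rw [h1]; exact mul_le_mul' le_rfl h2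
          _ = Cardinal.aleph 1 := Cardinal.mul_eq_self Cardinal.aleph0_lt_aleph_one.le
      · rw [← (hfC' 0 omega1_isLimit.pos).1.2]
        exact Cardinal.mk_le_mk_of_subset
          (Set.subset_biUnion_of_mem (show (0 : Ordinal.{0}) ∈ Set.Iio omega1 from
            omega1_isLimit.pos))
    · intro s hs
      have hbound : ∃ α, α < omega1 ∧ ↑s ⊆ f α := by
        induction s using Finset.induction_on with
        | empty => exact ⟨0, omega1_isLimit.pos, by simp⟩
        | @insert a t ha iht =>
          have hsub : (↑t : Set Ordinal.{0}) ⊆ ⋃ α ∈ Set.Iio omega1, f α :=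
            fun b hb => hs (by simp [hb])
          obtain ⟨γ, hγ, hγs⟩ := iht hsub
          have haX : a ∈ ⋃ α ∈ Set.Iio omega1, f α := hs (by simp)
          obtain ⟨β, hβ, hβa⟩ := Set.mem_iUnion₂.mp haX
          refine ⟨max β γ, max_lt hβ hγ, ?_⟩
          rw [Finset.coe_insert]
          exact Set.insert_subset (hfmono β _ (le_max_left β γ) (max_lt hβ hγ) hβa)
            (hγs.trans (hfmono γ _ (le_max_right β γ) (max_lt hβ hγ)))
      obtain ⟨α, hα, hαs⟩ := hbound
      exact Set.Subset.trans ((hfC' α hα).2 s hαs)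
        (Set.subset_biUnion_of_mem (show α ∈ Set.Iio omega1 from hα))
  · -- local clubs witnessed by C ∩ P(X)
    intro X hX
    obtain ⟨⟨hXK, hXcard⟩, hXcl⟩ := hX
    refine ⟨{y | y ∈ C ∧ y ⊆ X}, ⟨?_, ?_, ?_⟩, fun y hy => hCS hy.1⟩
    · intro y hy
      obtain ⟨h1, h2, h3⟩ := hCsub hy.1
      exact ⟨hy.2, h2, h3⟩
    · intro x hx
      obtain ⟨hxX, hxc, hxgood⟩ := hx
      rcases x.eq_empty_or_nonempty with rfl | hne
      · exact ⟨ybar g ∅, ⟨(hspec ∅ (by simp)).1, hXcl ∅ (by simp)⟩, Set.empty_subset _⟩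
      · obtain ⟨a, rfl⟩ := hxc.exists_eq_range hne
        set sfin : ℕ → Finset Ordinal.{0} := fun n => (Finset.range (n + 1)).image a
          with hsfin
        have hsX : ∀ n, ↑(sfin n) ⊆ Set.range a := by
          intro n b hb
          simp only [hsfin, Finset.coe_image, Set.mem_image, Finset.mem_coe,
            Finset.mem_range] at hb
          obtain ⟨m, _, rfl⟩ := hb
          exact Set.mem_range_self m
        have hsK : ∀ n, ↑(sfin n) ⊆ K := fun n => (hsX n).trans (hxX.trans hXK)
        have hmono' : ∀ m n, m ≤ n → ybar g (sfin m) ⊆ ybar g (sfin n) := by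
          intro m n hmn
          refine hmono _ _ ?_ (hsK n)
          exact Finset.image_subset_image (by
            intro k hk
            simp only [Finset.mem_range] at hk ⊢
            omega)
        have hUnion : ⋃₀ Set.range (fun n => ybar g (sfin n)) ∈ C := by
          apply hCchain
          · rintro _ ⟨n, rfl⟩
            exact (hspec _ (hsK n)).1
          · exact Set.countable_range _
          · exact Set.range_nonempty _
          · rintro _ ⟨m, rfl⟩ _ ⟨n, rfl⟩ _
            rcases le_total m n with hmn | hmn
            · exact Or.inl (hmono' m n hmn)
            · exact Or.inr (hmono' n m hmn)
        refine ⟨_, ⟨hUnion, ?_⟩, ?_⟩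
        · rw [Set.sUnion_range]
          exact Set.iUnion_subset fun n => hXcl (sfin n) ((hsX n).trans hxX)
        · rw [Set.sUnion_range]
          rintro b ⟨k, rfl⟩
          refine Set.mem_iUnion.mpr ⟨k, (hspec (sfin k) (hsK k)).2.1 ?_⟩
          exact Finset.mem_coe.mpr (Finset.mem_image.mpr
            ⟨k, Finset.mem_range.mpr (Nat.lt_succ_self k), rfl⟩)
    · intro D₀ hD₀ hc hne hchain
      exact ⟨hCchain D₀ (fun y hy => (hD₀ hy).1) hc hne hchain,
        Set.sUnion_subset fun y hy => (hD₀ hy).2⟩
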